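/- arXiv:1306.6197 — 2 statements merged into one kernel-verified Lean document; each statement's English description precedes it below -/
import Mathlib

section
/- Let ρ : T → ℝ be a smooth periodic function with ρ ≥ 0 that attains its maximum at a point x_t, and suppose ρ(x_t) ≥ 4⟨ρ⟩, where ⟨ρ⟩ = (1/2π)∫_T ρ dx > 0. Then Λρ(x_t) ≥ ρ(x_t)² / (4π² ⟨ρ⟩). -/
open Real Set intervalIntegral

private lemma quad_bound (f : ℝ → ℝ) (hf : ContDiff ℝ (⊤ : ℕ∞) f) (a r : ℝ) (hr : 0 ≤ r)
    (h0 : deriv f a = 0) (K : ℝ)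
    (hK : ∀ y ∈ Icc (a - r) (a + r), |deriv (deriv f) y| ≤ K) :
    ∀ y ∈ Icc (a - r) (a + r), |f y - f a| ≤ K / 2 * (y - a) ^ 2 := by
  have hf' : ContDiff ℝ (↑(⊤:ℕ∞)) f := hf.of_le (by simp)
  have hf1 : Differentiable ℝ f := hf'.differentiable (by simp)
  have hf2 : ContDiff ℝ (↑(⊤:ℕ∞)) (deriv f) := (contDiff_infty_iff_deriv.mp hf').2
  have hf2d : Differentiable ℝ (deriv f) := hf2.differentiable (by simp)
  have hmem : a ∈ Icc (a - r) (a + r) := by constructor <;> linarith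
  have hd1 : ∀ y ∈ Icc (a - r) (a + r), |deriv f y| ≤ K * |y - a| := by
    intro y hy
    have := Convex.norm_image_sub_le_of_norm_deriv_le (f := deriv f)
      (fun x _ => hf2d x) (fun x hx => by simpa using hK x hx) (convex_Icc _ _) hmem hy
    simpa [h0, Real.norm_eq_abs] using this
  intro y hy
  have hftc : ∫ s in a..y, deriv f s = f y - f a :=
    integral_deriv_eq_sub (fun x _ => hf1 x) (hf2.continuous.intervalIntegrable _ _)
  have hcd : Continuous fun s => |deriv f s| := hf2.continuous.abs
  rcases le_total a y with h | h
  · have h1 : |f y - f a| ≤ ∫ s in a..y, |deriv f s| := by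
      rw [← hftc]
      simpa using intervalIntegral.abs_integral_le_integral_abs (f := deriv f) h
    have h2 : (∫ s in a..y, |deriv f s|) ≤ ∫ s in a..y, K * (s - a) := by
      apply intervalIntegral.integral_mono_on h (hcd.intervalIntegrable _ _)
        ((continuous_const.mul (continuous_id.sub continuous_const)).intervalIntegrable _ _)
      intro s hs
      have hs' : s ∈ Icc (a - r) (a + r) := by
        constructor
        · linarith [hs.1]
        · linarith [hs.2, hy.2]
      have := hd1 s hs'
      rwa [abs_of_nonneg (by linarith [hs.1] : (0:ℝ) ≤ s - a)] at this
    have h3 : (∫ s in a..y, K * (s - a)) = K / 2 * (y - a) ^ 2 := by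
      rw [intervalIntegral.integral_const_mul]
      have : (∫ s in a..y, (s - a)) = ∫ s in (a - a)..(y - a), s :=
        intervalIntegral.integral_comp_sub_right (fun u => u) a
      rw [this, integral_id]
      ring
    calc |f y - f a| ≤ ∫ s in a..y, |deriv f s| := h1
      _ ≤ ∫ s in a..y, K * (s - a) := h2
      _ = K / 2 * (y - a) ^ 2 := h3
  · have h1 : |f y - f a| ≤ ∫ s in y..a, |deriv f s| := by
      rw [← hftc]
      rw [intervalIntegral.integral_symm y a, abs_neg]
      simpa using intervalIntegral.abs_integral_le_integral_abs (f := deriv f) h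
    have h2 : (∫ s in y..a, |deriv f s|) ≤ ∫ s in y..a, K * (a - s) := by
      apply intervalIntegral.integral_mono_on h (hcd.intervalIntegrable _ _)
        ((continuous_const.mul (continuous_const.sub continuous_id)).intervalIntegrable _ _)
      intro s hs
      have hs' : s ∈ Icc (a - r) (a + r) := by
        constructor
        · linarith [hs.1, hy.1]
        · linarith [hs.2]
      have := hd1 s hs'
      rwa [abs_of_nonpos (by linarith [hs.2] : s - a ≤ 0), neg_sub] at this
    have h3 : (∫ s in y..a, K * (a - s)) = K / 2 * (y - a) ^ 2 := by
      rw [intervalIntegral.integral_const_mul]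
      have : (∫ s in y..a, (a - s)) = ∫ s in (a - a)..(a - y), s :=
        intervalIntegral.integral_comp_sub_left (fun u => u) a
      rw [this, integral_id]
      ring
    calc |f y - f a| ≤ ∫ s in y..a, |deriv f s| := h1
      _ ≤ ∫ s in y..a, K * (a - s) := h2
      _ = K / 2 * (y - a) ^ 2 := h3

set_option maxHeartbeats 1000000 in
/-- If a smooth nonnegative periodic `ρ` attains its maximum at `x_t`
and `ρ(x_t) ≥ 4⟨ρ⟩` with `⟨ρ⟩ = (1/2π)∫_T ρ > 0`, then
`Λρ(x_t) ≥ ρ(x_t)² / (4π²⟨ρ⟩)`, where `Λρ(x_t)` is given by the kernel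
representation `(1/2π)∫_T (ρ(x_t) − ρ(y))/sin²((x_t−y)/2) dy`. -/
theorem half_laplacian_lower_bound_at_max
    (ρ : ℝ → ℝ) (hρ : ContDiff ℝ (⊤ : ℕ∞) ρ) (hper : Function.Periodic ρ (2 * π))
    (hnonneg : ∀ x, 0 ≤ ρ x)
    (x_t : ℝ) (hmax : ∀ x, ρ x ≤ ρ x_t)
    (m : ℝ) (hm : m = (1 / (2 * π)) * ∫ y in (-π)..π, ρ y) (hm_pos : 0 < m)
    (hbig : 4 * m ≤ ρ x_t)
    (Λρ : ℝ) (hΛ : Λρ = (1 / (2 * π)) * ∫ y in (-π)..π,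
      (ρ x_t - ρ y) / (Real.sin ((x_t - y) / 2)) ^ 2) :
    ρ x_t ^ 2 / (4 * π ^ 2 * m) ≤ Λρ := by
  have hπ : (0:ℝ) < π := Real.pi_pos
  have hρc : Continuous ρ := hρ.continuous
  set M := ρ x_t with hMdef
  have hMpos : 0 < M := lt_of_lt_of_le (by linarith) hbig
  set F : ℝ → ℝ := fun y => (M - ρ y) / (Real.sin ((x_t - y) / 2)) ^ 2 with hF
  have hFnn : ∀ y, 0 ≤ F y := fun y => div_nonneg (by linarith [hmax y]) (sq_nonneg _)
  -- derivative vanishes at max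
  have hlm : IsLocalMax ρ x_t := Filter.Eventually.of_forall hmax
  have hd0 : deriv ρ x_t = 0 := hlm.deriv_eq_zero
  -- bound on second derivative
  have hρ' : ContDiff ℝ (↑(⊤:ℕ∞)) ρ := hρ.of_le (by simp)
  have hdd : Continuous (deriv (deriv ρ)) :=
    ((contDiff_infty_iff_deriv.mp (contDiff_infty_iff_deriv.mp hρ').2).2).continuous
  obtain ⟨K, hK⟩ := (isCompact_Icc (a := x_t - π) (b := x_t + π)).exists_bound_of_continuousOn
    hdd.continuousOn
  have hxmem : x_t ∈ Icc (x_t - π) (x_t + π) := by constructor <;> linarith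
  have hKnn : 0 ≤ K := le_trans (norm_nonneg _) (hK x_t hxmem)
  have hquad : ∀ y ∈ Icc (x_t - π) (x_t + π), M - ρ y ≤ K / 2 * (y - x_t) ^ 2 := by
    intro y hy
    have := quad_bound ρ hρ x_t π hπ.le hd0 K (fun s hs => by simpa using hK s hs) y hy
    have h2 := (abs_le.mp this).1
    simp only [← hMdef] at h2 ⊢
    linarith
  -- upper bound for F on the period interval
  have hFb : ∀ y ∈ Icc (x_t - π) (x_t + π), F y ≤ K / 2 * π ^ 2 := by
    intro y hy
    rcases eq_or_ne y x_t with rfl | hne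
    · have : F y = 0 := by simp [hF]
      rw [this]; positivity
    · have hθne : x_t - y ≠ 0 := sub_ne_zero.mpr (Ne.symm hne)
      have hθabs : |x_t - y| ≤ π := by
        rw [abs_le]; constructor <;> [linarith [hy.2]; linarith [hy.1]]
      have hsin : ((x_t - y) / π) ^ 2 ≤ (Real.sin ((x_t - y) / 2)) ^ 2 := by
        have h1 : |x_t - y| / π ≤ Real.sin (|x_t - y| / 2) := by
          have := Real.mul_le_sin (x := |x_t - y| / 2) (by positivity) (by linarith)
          calc |x_t - y| / π = 2 / π * (|x_t - y| / 2) := by field_simp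
            _ ≤ Real.sin (|x_t - y| / 2) := this
        have h2 : (|x_t - y| / π) ^ 2 ≤ (Real.sin (|x_t - y| / 2)) ^ 2 :=
          pow_le_pow_left₀ (by positivity) h1 2
        have h3 : (Real.sin (|x_t - y| / 2)) ^ 2 = (Real.sin ((x_t - y) / 2)) ^ 2 := by
          rcases abs_choice (x_t - y) with h | h <;> rw [h]
          have : -(x_t - y) / 2 = -((x_t - y) / 2) := by ring
          rw [this, Real.sin_neg, neg_sq]
        have h4 : (|x_t - y| / π) ^ 2 = ((x_t - y) / π) ^ 2 := by
          rw [div_pow, div_pow, sq_abs]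
        rw [← h4, ← h3]; exact h2
      have hspos : 0 < (Real.sin ((x_t - y) / 2)) ^ 2 :=
        lt_of_lt_of_le (by positivity) hsin
      have hnum : M - ρ y ≤ K / 2 * (x_t - y) ^ 2 := by
        have := hquad y hy; nlinarith [sq_nonneg (y - x_t)]
      calc F y = (M - ρ y) / (Real.sin ((x_t - y) / 2)) ^ 2 := rfl
        _ ≤ (M - ρ y) / (((x_t - y) / π) ^ 2) := by
            apply div_le_div_of_nonneg_left (by linarith [hmax y]) (by positivity) hsin
        _ ≤ (K / 2 * (x_t - y) ^ 2) / (((x_t - y) / π) ^ 2) := by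
            apply div_le_div_of_nonneg_right hnum (by positivity)
        _ = K / 2 * π ^ 2 := by field_simp
  -- integrability of F on the period interval
  have hFmeas : Measurable F := by
    apply Measurable.div
    · fun_prop
    · fun_prop
  have hle1 : x_t - π ≤ x_t + π := by linarith
  have hFint : IntervalIntegrable F MeasureTheory.volume (x_t - π) (x_t + π) := by
    apply IntervalIntegrable.mono_fun' (g := fun _ => K / 2 * π ^ 2)
      intervalIntegrable_const hFmeas.aestronglyMeasurable.restrict
    rw [uIoc_of_le hle1]
    refine (MeasureTheory.ae_restrict_iff' measurableSet_Ioc).mpr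
      (Filter.Eventually.of_forall fun y hy => ?_)
    show ‖F y‖ ≤ K / 2 * π ^ 2
    rw [Real.norm_eq_abs, abs_of_nonneg (hFnn y)]
    exact hFb y (Ioc_subset_Icc_self hy)
  -- periodicity of F and shifting the integrals
  have hFper : Function.Periodic F (2 * π) := by
    intro y
    have h2 : Real.sin ((x_t - (y + 2 * π)) / 2) ^ 2 = Real.sin ((x_t - y) / 2) ^ 2 := by
      have he : (x_t - (y + 2 * π)) / 2 = (x_t - y) / 2 - π := by ring
      rw [he, Real.sin_sub_pi, neg_sq]
    simp only [hF, hper y, h2]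
  have e1 : -π + 2 * π = π := by ring
  have e2 : x_t - π + 2 * π = x_t + π := by ring
  have hshiftF : (∫ y in (-π)..π, F y) = ∫ y in (x_t - π)..(x_t + π), F y := by
    have := hFper.intervalIntegral_add_eq (-π) (x_t - π)
    rwa [e1, e2] at this
  have hshiftρ : (∫ y in (-π)..π, ρ y) = ∫ y in (x_t - π)..(x_t + π), ρ y := by
    have := hper.intervalIntegral_add_eq (-π) (x_t - π)
    rwa [e1, e2] at this
  have h2πm : (∫ y in (x_t - π)..(x_t + π), ρ y) = 2 * π * m := by
    rw [← hshiftρ, hm]; field_simp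
  -- the small interval
  set δ := 2 * π * m / M with hδdef
  have hδpos : 0 < δ := by positivity
  have hδle : δ ≤ π / 2 := by
    rw [hδdef, div_le_iff₀ hMpos]; nlinarith
  have hρint : ∀ a b : ℝ, IntervalIntegrable ρ MeasureTheory.volume a b :=
    fun a b => hρc.intervalIntegrable a b
  have hsubρ : (∫ y in (x_t - δ)..(x_t + δ), ρ y) ≤ 2 * π * m := by
    rw [← h2πm]
    have hA := intervalIntegral.integral_add_adjacent_intervals (a := x_t - π)
      (b := x_t - δ) (c := x_t + π) (hρint _ _) (hρint _ _)
    have hB := intervalIntegral.integral_add_adjacent_intervals (a := x_t - δ)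
      (b := x_t + δ) (c := x_t + π) (hρint _ _) (hρint _ _)
    have hn1 : 0 ≤ ∫ y in (x_t - π)..(x_t - δ), ρ y :=
      intervalIntegral.integral_nonneg (by linarith) (fun u _ => hnonneg u)
    have hn2 : 0 ≤ ∫ y in (x_t + δ)..(x_t + π), ρ y :=
      intervalIntegral.integral_nonneg (by linarith) (fun u _ => hnonneg u)
    linarith
  -- lower bound for F on the small interval
  have hlow : ∀ y ∈ Icc (x_t - δ) (x_t + δ), 4 / δ ^ 2 * (M - ρ y) ≤ F y := by
    intro y hy
    rcases eq_or_ne y x_t with rfl | hne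
    · have : M - ρ y = 0 := by simp [hMdef]
      rw [this, mul_zero]; exact hFnn y
    · have hθne : x_t - y ≠ 0 := sub_ne_zero.mpr (Ne.symm hne)
      have hθabs : |x_t - y| ≤ δ := by
        rw [abs_le]; constructor <;> [linarith [hy.2]; linarith [hy.1]]
      have hup : (Real.sin ((x_t - y) / 2)) ^ 2 ≤ δ ^ 2 / 4 := by
        have h1 : (Real.sin ((x_t - y) / 2)) ^ 2 ≤ ((x_t - y) / 2) ^ 2 := Real.sin_sq_le_sq
        have h2 : (x_t - y) ^ 2 ≤ δ ^ 2 := by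
          have := abs_le.mp hθabs; nlinarith
        nlinarith
      have hspos : 0 < (Real.sin ((x_t - y) / 2)) ^ 2 := by
        have hne2 : Real.sin ((x_t - y) / 2) ≠ 0 := by
          rw [Ne, Real.sin_eq_zero_iff_of_lt_of_lt (by linarith [abs_le.mp hθabs] : -π < (x_t - y)/2)
            (by linarith [abs_le.mp hθabs] : (x_t - y)/2 < π)]
          exact fun h => hθne (by linarith)
        positivity
      have hnumnn : 0 ≤ M - ρ y := by linarith [hmax y]
      calc 4 / δ ^ 2 * (M - ρ y) = (M - ρ y) / (δ ^ 2 / 4) := by field_simp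
        _ ≤ (M - ρ y) / (Real.sin ((x_t - y) / 2)) ^ 2 :=
            div_le_div_of_nonneg_left hnumnn hspos hup
        _ = F y := rfl
  -- integral lower bound on the small interval
  have hFintδ : IntervalIntegrable F MeasureTheory.volume (x_t - δ) (x_t + δ) := by
    apply hFint.mono_set
    rw [uIcc_of_le (by linarith), uIcc_of_le hle1]
    exact Icc_subset_Icc (by linarith) (by linarith)
  have hmid : 4 / δ ^ 2 * (2 * δ * M - 2 * π * m) ≤ ∫ y in (x_t - δ)..(x_t + δ), F y := by
    have h1 : (∫ y in (x_t - δ)..(x_t + δ), 4 / δ ^ 2 * (M - ρ y)) ≤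
        ∫ y in (x_t - δ)..(x_t + δ), F y :=
      intervalIntegral.integral_mono_on (by linarith)
        (((continuous_const.mul (continuous_const.sub hρc))).intervalIntegrable _ _)
        hFintδ hlow
    have h2 : (∫ y in (x_t - δ)..(x_t + δ), 4 / δ ^ 2 * (M - ρ y)) =
        4 / δ ^ 2 * (2 * δ * M - ∫ y in (x_t - δ)..(x_t + δ), ρ y) := by
      rw [intervalIntegral.integral_const_mul,
        intervalIntegral.integral_sub (intervalIntegrable_const) (hρint _ _),
        intervalIntegral.integral_const]
      congr 1
      rw [smul_eq_mul]
      ring_nf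
    have h3 : 4 / δ ^ 2 * (2 * δ * M - 2 * π * m) ≤
        4 / δ ^ 2 * (2 * δ * M - ∫ y in (x_t - δ)..(x_t + δ), ρ y) := by
      apply mul_le_mul_of_nonneg_left (by linarith [hsubρ]) (by positivity)
    linarith
  -- monotonicity: small interval ≤ period interval
  have hbig2 : (∫ y in (x_t - δ)..(x_t + δ), F y) ≤ ∫ y in (x_t - π)..(x_t + π), F y := by
    have hi1 : IntervalIntegrable F MeasureTheory.volume (x_t - π) (x_t - δ) := by
      apply hFint.mono_set
      rw [uIcc_of_le (by linarith), uIcc_of_le hle1]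
      exact Icc_subset_Icc (by linarith) (by linarith)
    have hi2 : IntervalIntegrable F MeasureTheory.volume (x_t + δ) (x_t + π) := by
      apply hFint.mono_set
      rw [uIcc_of_le (by linarith), uIcc_of_le hle1]
      exact Icc_subset_Icc (by linarith) (by linarith)
    have hA := intervalIntegral.integral_add_adjacent_intervals (a := x_t - π)
      (b := x_t - δ) (c := x_t + δ) hi1 hFintδ
    have hB := intervalIntegral.integral_add_adjacent_intervals (a := x_t - π)
      (b := x_t + δ) (c := x_t + π) (hi1.trans hFintδ) hi2
    have hn1 : 0 ≤ ∫ y in (x_t - π)..(x_t - δ), F y :=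
      intervalIntegral.integral_nonneg (by linarith) (fun u _ => hFnn u)
    have hn2 : 0 ≤ ∫ y in (x_t + δ)..(x_t + π), F y :=
      intervalIntegral.integral_nonneg (by linarith) (fun u _ => hFnn u)
    linarith
  -- conclusion
  have hδM : δ * M = 2 * π * m := by
    rw [hδdef]; field_simp
  have hkey : M ^ 2 / (4 * π ^ 2 * m) ≤ (1 / (2 * π)) * (4 / δ ^ 2 * (2 * δ * M - 2 * π * m)) := by
    have h2 : 2 * δ * M - 2 * π * m = 2 * π * m := by linarith
    rw [h2]
    have h3 : (1 / (2 * π)) * (4 / δ ^ 2 * (2 * π * m)) = 4 * m / δ ^ 2 := by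
      field_simp
    rw [h3, div_le_div_iff₀ (by positivity) (by positivity)]
    have h4 : (δ * M) ^ 2 = (2 * π * m) ^ 2 := by rw [hδM]
    nlinarith [h4, sq_nonneg (π * m)]
  have hchain : (1 / (2 * π)) * (4 / δ ^ 2 * (2 * δ * M - 2 * π * m)) ≤ Λρ := by
    rw [hΛ, hshiftF]
    apply mul_le_mul_of_nonneg_left _ (by positivity)
    exact le_trans hmid hbig2
  exact le_trans hkey hchain
end

section
/- Let g : T → ℝ be a smooth periodic function. Then the pointwise inequality 2 g(x) Λg(x) ≥ Λ(g²)(x) holds for every x ∈ T. -/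
open Real Set intervalIntegral MeasureTheory

-- sin squared lower bound
lemma sin_half_sq_ge {y : ℝ} (h1 : -π ≤ y) (h2 : y ≤ π) :
    y ^ 2 / π ^ 2 ≤ (Real.sin (y / 2)) ^ 2 := by
  have hπ := Real.pi_pos
  rcases le_or_gt 0 y with hy | hy
  · have : y / π ≤ Real.sin (y / 2) := by
      simpa using Real.mul_le_sin (x := y / 2) (by positivity) (by linarith)
    have h0 : 0 ≤ y / π := by positivity
    have := pow_le_pow_left₀ h0 this 2
    calc y ^ 2 / π ^ 2 = (y / π) ^ 2 := by ring
    _ ≤ _ := this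
  · have : (-y) / π ≤ Real.sin ((-y) / 2) := by
      simpa using Real.mul_le_sin (x := (-y) / 2) (by have := Real.pi_pos; linarith [Real.pi_pos]) (by linarith)
    have h0 : 0 ≤ (-y) / π := div_nonneg (by linarith) Real.pi_pos.le
    have := pow_le_pow_left₀ h0 this 2
    calc y ^ 2 / π ^ 2 = ((-y) / π) ^ 2 := by ring
    _ ≤ (Real.sin ((-y)/2)) ^ 2 := this
    _ = _ := by rw [show (-y)/2 = -(y/2) by ring, Real.sin_neg]; ring

lemma aux_num_bound (f : ℝ → ℝ) (hf : ContDiff ℝ (⊤ : ℕ∞) f) (x : ℝ) :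
    ∃ M : ℝ, 0 ≤ M ∧ ∀ y : ℝ, |y| ≤ π →
      |2 * f x - f (x + y) - f (x - y)| ≤ 2 * M * y ^ 2 := by
  have hπ := Real.pi_pos
  have hfi : ContDiff ℝ (⊤ : ℕ∞) f := hf.of_le (by simp)
  have hf' : ContDiff ℝ (⊤ : ℕ∞) (deriv f) := (contDiff_infty_iff_deriv.mp hfi).2
  have hf'' : ContDiff ℝ (⊤ : ℕ∞) (deriv (deriv f)) := (contDiff_infty_iff_deriv.mp hf').2
  obtain ⟨M, hM⟩ := isCompact_Icc.exists_bound_of_continuousOn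
    (s := Icc (x - π) (x + π)) hf''.continuous.continuousOn
  have hM0 : 0 ≤ M := le_trans (norm_nonneg _) (hM x ⟨by linarith, by linarith⟩)
  refine ⟨M, hM0, fun y hy => ?_⟩
  -- step A : bound on first derivative difference
  have stepA : ∀ t : ℝ, |t| ≤ π → |deriv f (x + t) - deriv f (x - t)| ≤ 2 * M * |t| := by
    intro t ht
    have hdiff : ∀ s ∈ Set.uIcc (x - t) (x + t), DifferentiableAt ℝ (deriv f) s :=
      fun s _ => (hf'.differentiable (by simp)).differentiableAt
    have hint : IntervalIntegrable (deriv (deriv f)) MeasureTheory.volume (x - t) (x + t) :=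
      hf''.continuous.intervalIntegrable _ _
    have heq := intervalIntegral.integral_deriv_eq_sub hdiff hint
    have hb : ∀ s ∈ Set.uIoc (x - t) (x + t), ‖deriv (deriv f) s‖ ≤ M := by
      intro s hs
      have hs' := Set.uIoc_subset_uIcc hs
      rw [Set.uIcc_eq_union] at hs'
      apply hM
      rcases hs' with h | h
      · rcases abs_le.mp ht with ⟨h1, h2⟩
        exact ⟨by linarith [h.1], by linarith [h.2]⟩
      · rcases abs_le.mp ht with ⟨h1, h2⟩
        exact ⟨by linarith [h.1], by linarith [h.2]⟩
    have := intervalIntegral.norm_integral_le_of_norm_le_const hb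
    rw [heq] at this
    calc |deriv f (x + t) - deriv f (x - t)| ≤ M * |(x + t) - (x - t)| := this
    _ = M * |2 * t| := by ring_nf
    _ = 2 * M * |t| := by rw [abs_mul]; simp [abs_of_nonneg]; ring
  -- step B : second difference bound via integration
  have hderivφ : ∀ t : ℝ, HasDerivAt (fun s => f (x + s) + f (x - s))
      (deriv f (x + t) - deriv f (x - t)) t := by
    intro t
    have h1 : HasDerivAt (fun s => f (x + s)) (deriv f (x + t) * 1) t :=
      HasDerivAt.comp t ((hf.differentiable (by simp) (x + t)).hasDerivAt)
        ((hasDerivAt_id t).const_add x)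
    have h2 : HasDerivAt (fun s => f (x - s)) (deriv f (x - t) * (-1)) t :=
      HasDerivAt.comp t ((hf.differentiable (by simp) (x - t)).hasDerivAt)
        ((hasDerivAt_id t).neg.const_add x)
    exact (h1.add h2).congr_deriv (by ring)
  have hcont : Continuous fun t => deriv f (x + t) - deriv f (x - t) :=
    ((hf'.continuous.comp (continuous_const.add continuous_id)).sub
      (hf'.continuous.comp (continuous_const.sub continuous_id)))
  have heq2 := intervalIntegral.integral_eq_sub_of_hasDerivAt
    (f := fun s => f (x + s) + f (x - s)) (a := 0) (b := y)
    (fun t _ => hderivφ t) (hcont.intervalIntegrable _ _)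
  have hb2 : ∀ t ∈ Set.uIoc 0 y, ‖deriv f (x + t) - deriv f (x - t)‖ ≤ 2 * M * |y| := by
    intro t ht
    have h1 : |t| ≤ |y| := by
      rcases Set.mem_uIoc.mp ht with h | h
      · rw [abs_of_pos h.1, abs_of_pos (lt_of_lt_of_le h.1 h.2)]; exact h.2
      · rw [abs_of_nonpos h.2, abs_of_neg (lt_of_lt_of_le h.1 h.2)]; linarith [h.1]
    calc ‖deriv f (x + t) - deriv f (x - t)‖ ≤ 2 * M * |t| := stepA t (h1.trans hy)
    _ ≤ 2 * M * |y| := by nlinarith [abs_nonneg t]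
  have := intervalIntegral.norm_integral_le_of_norm_le_const hb2
  rw [heq2] at this
  simp only [add_zero, sub_zero] at this
  calc |2 * f x - f (x + y) - f (x - y)|
      = ‖(f (x + y) + f (x - y)) - (f x + f x)‖ := by rw [Real.norm_eq_abs, ← abs_neg]; ring_nf
  _ ≤ 2 * M * |y| * |y| := this
  _ = 2 * M * y ^ 2 := by rw [mul_assoc, abs_mul_abs_self]; ring

lemma aux_integrable (f : ℝ → ℝ) (hf : ContDiff ℝ (⊤ : ℕ∞) f) (x : ℝ) :
    IntervalIntegrable (fun y => (2 * f x - f (x + y) - f (x - y)) / (Real.sin (y / 2)) ^ 2)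
      MeasureTheory.volume (-π) π := by
  have hπ := Real.pi_pos
  obtain ⟨M, hM0, hM⟩ := aux_num_bound f hf x
  have hcontN : Continuous (fun y => 2 * f x - f (x + y) - f (x - y)) := by
    have c1 : Continuous (fun y : ℝ => f (x + y)) :=
      hf.continuous.comp (continuous_const.add continuous_id)
    have c2 : Continuous (fun y : ℝ => f (x - y)) :=
      hf.continuous.comp (continuous_const.sub continuous_id)
    exact (continuous_const.sub c1).sub c2
  apply IntervalIntegrable.mono_fun' (g := fun _ => 2 * M * π ^ 2)
    (intervalIntegrable_const)
  · exact (hcontN.measurable.div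
      ((Real.continuous_sin.comp (continuous_id.div_const 2)).pow 2).measurable
      ).aestronglyMeasurable
  · rw [Set.uIoc_of_le (by linarith)]
    refine (MeasureTheory.ae_restrict_iff' measurableSet_Ioc).mpr (Filter.Eventually.of_forall ?_)
    intro y hy
    have hy1 : -π ≤ y := hy.1.le
    have hy2 : y ≤ π := hy.2
    have hya : |y| ≤ π := abs_le.mpr ⟨hy1, hy2⟩
    have hsin := sin_half_sq_ge hy1 hy2
    rcases eq_or_ne y 0 with rfl | hy0
    · simp [Real.norm_eq_abs]; positivity
    · have hy2pos : 0 < y ^ 2 / π ^ 2 := by positivity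
      have hspos : 0 < (Real.sin (y / 2)) ^ 2 := lt_of_lt_of_le hy2pos hsin
      simp only [Real.norm_eq_abs, abs_div, abs_of_pos hspos]
      calc |2 * f x - f (x + y) - f (x - y)| / (Real.sin (y / 2)) ^ 2
          ≤ (2 * M * y ^ 2) / (y ^ 2 / π ^ 2) :=
            div_le_div₀ (by positivity) (hM y hya) hy2pos hsin
      _ = 2 * M * π ^ 2 := by field_simp

/-- Córdoba–Córdoba pointwise inequality `2 g Λg ≥ Λ(g²)` on the
torus, where `Λ` is the half-Laplacian, represented here by its (absolutely
convergent, symmetrized) kernel form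
`Λh(x) = (1/4π) ∫_T (2h(x) − h(x+y) − h(x−y))/sin²(y/2) dy`. -/
theorem cordoba_pointwise_inequality
    (g Λg Λg2 : ℝ → ℝ) (hg : ContDiff ℝ (⊤ : ℕ∞) g) (hper : Function.Periodic g (2 * π))
    (hΛg : ∀ x, Λg x = (1 / (4 * π)) * ∫ y in (-π)..π,
      (2 * g x - g (x + y) - g (x - y)) / (Real.sin (y / 2)) ^ 2)
    (hΛg2 : ∀ x, Λg2 x = (1 / (4 * π)) * ∫ y in (-π)..π,
      (2 * (g x) ^ 2 - (g (x + y)) ^ 2 - (g (x - y)) ^ 2) / (Real.sin (y / 2)) ^ 2) :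
    ∀ x, Λg2 x ≤ 2 * g x * Λg x := by
  intro x
  have hπ := Real.pi_pos
  have h1 := aux_integrable g hg x
  have h2' := aux_integrable (fun t => (g t) ^ 2) (hg.pow 2) x
  have h2 : IntervalIntegrable (fun y =>
      (2 * (g x) ^ 2 - (g (x + y)) ^ 2 - (g (x - y)) ^ 2) / (Real.sin (y / 2)) ^ 2)
      MeasureTheory.volume (-π) π := h2'
  have hkey : (∫ y in (-π)..π,
        (2 * (g x) ^ 2 - (g (x + y)) ^ 2 - (g (x - y)) ^ 2) / (Real.sin (y / 2)) ^ 2)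
      ≤ ∫ y in (-π)..π,
        2 * g x * ((2 * g x - g (x + y) - g (x - y)) / (Real.sin (y / 2)) ^ 2) := by
    apply intervalIntegral.integral_mono_on (by linarith) h2 (h1.const_mul _)
    intro y _
    rw [← mul_div_assoc, div_eq_mul_inv, div_eq_mul_inv]
    exact mul_le_mul_of_nonneg_right
      (by nlinarith [sq_nonneg (g x - g (x + y)), sq_nonneg (g x - g (x - y))])
      (inv_nonneg.mpr (sq_nonneg _))
  have h3 : (∫ y in (-π)..π,
        2 * g x * ((2 * g x - g (x + y) - g (x - y)) / (Real.sin (y / 2)) ^ 2))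
      = 2 * g x * ∫ y in (-π)..π,
        (2 * g x - g (x + y) - g (x - y)) / (Real.sin (y / 2)) ^ 2 :=
    intervalIntegral.integral_const_mul _ _
  have hc : (0 : ℝ) ≤ 1 / (4 * π) := by positivity
  rw [hΛg x, hΛg2 x]
  calc 1 / (4 * π) * ∫ y in (-π)..π,
        (2 * (g x) ^ 2 - (g (x + y)) ^ 2 - (g (x - y)) ^ 2) / (Real.sin (y / 2)) ^ 2
      ≤ 1 / (4 * π) * ∫ y in (-π)..π,
        2 * g x * ((2 * g x - g (x + y) - g (x - y)) / (Real.sin (y / 2)) ^ 2) :=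
        mul_le_mul_of_nonneg_left hkey hc
  _ = 2 * g x * (1 / (4 * π) * ∫ y in (-π)..π,
        (2 * g x - g (x + y) - g (x - y)) / (Real.sin (y / 2)) ^ 2) := by rw [h3]; ring
end
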